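/- arXiv:2003.01758 — 3 statements merged into one kernel-verified Lean document; each statement's English description precedes it below -/
import Mathlib

section
/- Suppose for every subbox of width 2^{-n} a 'patch bound' function B satisfies min B(X) ≤ min_{x∈X} p(x) ≤ min B(X) + ζ·2^{-2n} and max B(X) − ζ·2^{-2n} ≤ max_{x∈X} p(x) ≤ max B(X). If x* ∈ X is a global minimizer of p over the unit box, p is L-Lipschitz, and X has maximum width 2^{-n}, then for every other subbox Y of width 2^{-n}, max B(X) − min B(Y) ≤ L·√l·2^{-n} + 2ζ·2^{-2n}. -/
/-- Bound on the gap between the patch upper bound over the subbox containing a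
global minimizer and the patch lower bound over any other subbox, for subboxes
of maximum width 2^{-n}. -/
theorem patch_gap_bound (l n : ℕ) (L ζ : ℝ) (hζ : 0 ≤ ζ) (hL : 0 ≤ L)
    (p : EuclideanSpace ℝ (Fin l) → ℝ)
    (U : Set (EuclideanSpace ℝ (Fin l)))
    (hU : U = {x : EuclideanSpace ℝ (Fin l) | ∀ i, x i ∈ Set.Icc (0:ℝ) 1})
    (aX bX aY bY : Fin l → ℝ)
    (X Y : Set (EuclideanSpace ℝ (Fin l)))
    (hXdef : X = {x : EuclideanSpace ℝ (Fin l) | ∀ i, x i ∈ Set.Icc (aX i) (bX i)})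
    (hYdef : Y = {x : EuclideanSpace ℝ (Fin l) | ∀ i, x i ∈ Set.Icc (aY i) (bY i)})
    (hXU : X ⊆ U) (hYU : Y ⊆ U)
    (hXw : ∀ i, bX i - aX i ≤ (2:ℝ)^(-(n:ℤ)))
    (hYw : ∀ i, bY i - aY i ≤ (2:ℝ)^(-(n:ℤ)))
    (hLip : ∀ x ∈ U, ∀ y ∈ U, |p x - p y| ≤ L * dist x y)
    (xs : EuclideanSpace ℝ (Fin l)) (hxsX : xs ∈ X)
    (hxsmin : ∀ y ∈ U, p xs ≤ p y)
    (mBX MBX mBY MBY : ℝ)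
    (hX1 : ∀ x ∈ X, mBX ≤ p x)
    (hX2 : ∃ x ∈ X, p x ≤ mBX + ζ * (2:ℝ)^(-(2*n:ℤ)))
    (hX3 : ∀ x ∈ X, p x ≤ MBX)
    (hX4 : ∃ x ∈ X, MBX - ζ * (2:ℝ)^(-(2*n:ℤ)) ≤ p x)
    (hY1 : ∀ y ∈ Y, mBY ≤ p y)
    (hY2 : ∃ y ∈ Y, p y ≤ mBY + ζ * (2:ℝ)^(-(2*n:ℤ)))
    (hY3 : ∀ y ∈ Y, p y ≤ MBY)
    (hY4 : ∃ y ∈ Y, MBY - ζ * (2:ℝ)^(-(2*n:ℤ)) ≤ p y) :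
    MBX - mBY ≤ L * Real.sqrt l * (2:ℝ)^(-(n:ℤ)) + 2 * ζ * (2:ℝ)^(-(2*n:ℤ)) := by
  obtain ⟨x₂, hx₂X, hx₂⟩ := hX4
  obtain ⟨y₂, hy₂Y, hy₂⟩ := hY2
  have hx₂U := hXU hx₂X
  have hxsU := hXU hxsX
  have hy₂U := hYU hy₂Y
  -- dist bound
  have hdist : dist x₂ xs ≤ Real.sqrt l * (2:ℝ)^(-(n:ℤ)) := by
    have hw : (0:ℝ) ≤ (2:ℝ)^(-(n:ℤ)) := by positivity
    rw [EuclideanSpace.dist_eq]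
    simp only [Real.dist_eq, sq_abs]
    rw [show Real.sqrt l * (2:ℝ)^(-(n:ℤ)) = Real.sqrt (l * ((2:ℝ)^(-(n:ℤ)))^2) by
      rw [Real.sqrt_mul (Nat.cast_nonneg l), Real.sqrt_sq hw]]
    apply Real.sqrt_le_sqrt
    have : ∀ i, (x₂ i - xs i)^2 ≤ ((2:ℝ)^(-(n:ℤ)))^2 := by
      intro i
      have h1 : x₂ i ∈ Set.Icc (aX i) (bX i) := by
        have := hXdef ▸ hx₂X; exact this i
      have h2 : xs i ∈ Set.Icc (aX i) (bX i) := by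
        have := hXdef ▸ hxsX; exact this i
      have habs : |x₂ i - xs i| ≤ (2:ℝ)^(-(n:ℤ)) := by
        rw [abs_sub_le_iff]
        constructor <;> nlinarith [h1.1, h1.2, h2.1, h2.2, hXw i]
      calc (x₂ i - xs i)^2 = |x₂ i - xs i|^2 := (sq_abs _).symm
        _ ≤ ((2:ℝ)^(-(n:ℤ)))^2 := by nlinarith [abs_nonneg (x₂ i - xs i)]
    calc ∑ i, (x₂ i - xs i)^2 ≤ ∑ i : Fin l, ((2:ℝ)^(-(n:ℤ)))^2 :=
          Finset.sum_le_sum (fun i _ => this i)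
      _ = l * ((2:ℝ)^(-(n:ℤ)))^2 := by simp [mul_comm]
  have hlip := hLip x₂ hx₂U xs hxsU
  have h1 : p x₂ - p xs ≤ L * (Real.sqrt l * (2:ℝ)^(-(n:ℤ))) := by
    have := abs_le.mp hlip
    nlinarith [this.2, mul_le_mul_of_nonneg_left hdist hL]
  have h2 : p xs ≤ p y₂ := hxsmin y₂ hy₂U
  nlinarith
end

section
/- Let p be L-Lipschitz on [0,1]^l with global minimizer x*, and suppose patch bounds satisfy the enclosure property min B(X) ≤ min_X p ≤ min B(X) + ζ·2^{-2n} and max_X p ≥ max B(X) − ζ·2^{-2n} for subboxes of width 2^{-n}. Given ε > 0 and δ > 0, if n ≥ max{ −log₂ δ, −(1/2)·log₂(ε/(4ζ)) , −log₂(ε/(2L√l)) } (with ζ > 0), then the subbox X of width 2^{-n} containing x* satisfies: (a) its width is at most δ, and (b) max B(X) − min B(Y) ≤ ε for every subbox Y of width 2^{-n}. -/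
lemma aux_rpow_le (c m : ℝ) (hc : 0 < c) (h : -Real.logb 2 c ≤ m) :
    (2:ℝ) ^ (-m) ≤ c := by
  have h2 : (2:ℝ) ^ (-m) ≤ (2:ℝ) ^ (Real.logb 2 c) :=
    (Real.rpow_le_rpow_left_iff (by norm_num : (1:ℝ) < 2)).mpr (by linarith)
  rwa [Real.rpow_logb (by norm_num) (by norm_num) hc] at h2

/-- Unconstrained rate of convergence (Theorem 4): if
n ≥ max{−log₂ δ, −(1/2)log₂(ε/(4ζ)), −log₂(ε/(2L√l))}, then the subbox
containing the global minimizer has width at most δ, and the gap between its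
patch upper bound and the patch lower bound of any subbox is at most ε. -/
theorem unconstrained_rate_of_convergence (l n : ℕ) (hl : 0 < l)
    (L ζ ε δ : ℝ) (hζ : 0 < ζ) (hL : 0 < L) (hε : 0 < ε) (hδ : 0 < δ)
    (p : EuclideanSpace ℝ (Fin l) → ℝ)
    (U : Set (EuclideanSpace ℝ (Fin l)))
    (hU : U = {x : EuclideanSpace ℝ (Fin l) | ∀ i, x i ∈ Set.Icc (0:ℝ) 1})
    (hLip : ∀ x ∈ U, ∀ y ∈ U, |p x - p y| ≤ L * dist x y)
    (xs : EuclideanSpace ℝ (Fin l)) (hxsU : xs ∈ U)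
    (hxsmin : ∀ y ∈ U, p xs ≤ p y)
    (aX bX : Fin l → ℝ)
    (X : Set (EuclideanSpace ℝ (Fin l)))
    (hXdef : X = {x : EuclideanSpace ℝ (Fin l) | ∀ i, x i ∈ Set.Icc (aX i) (bX i)})
    (hXU : X ⊆ U) (hXw : ∀ i, bX i - aX i ≤ (2:ℝ)^(-(n:ℤ)))
    (hxsX : xs ∈ X)
    (mBX MBX : ℝ)
    (hX1 : ∀ x ∈ X, mBX ≤ p x)
    (hX2 : ∃ x ∈ X, p x ≤ mBX + ζ * (2:ℝ)^(-(2*n:ℤ)))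
    (hX3 : ∀ x ∈ X, p x ≤ MBX)
    (hX4 : ∃ x ∈ X, MBX - ζ * (2:ℝ)^(-(2*n:ℤ)) ≤ p x)
    (hn : max (max (-Real.logb 2 δ) (-(1/2) * Real.logb 2 (ε / (4*ζ))))
          (-Real.logb 2 (ε / (2 * L * Real.sqrt l))) ≤ (n:ℝ)) :
    (∀ i, bX i - aX i ≤ δ) ∧
    (∀ (aY bY : Fin l → ℝ) (Y : Set (EuclideanSpace ℝ (Fin l))) (mBY MBY : ℝ),
      Y = {x : EuclideanSpace ℝ (Fin l) | ∀ i, x i ∈ Set.Icc (aY i) (bY i)} →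
      Y ⊆ U → (∀ i, bY i - aY i ≤ (2:ℝ)^(-(n:ℤ))) →
      (∀ y ∈ Y, mBY ≤ p y) →
      (∃ y ∈ Y, p y ≤ mBY + ζ * (2:ℝ)^(-(2*n:ℤ))) →
      (∀ y ∈ Y, p y ≤ MBY) →
      (∃ y ∈ Y, MBY - ζ * (2:ℝ)^(-(2*n:ℤ)) ≤ p y) →
      MBX - mBY ≤ ε) := by
  have hsl : 0 < Real.sqrt l := Real.sqrt_pos.mpr (by exact_mod_cast hl)
  -- zpow to rpow conversions
  have e1 : ((2:ℝ)^(-(n:ℤ)) : ℝ) = (2:ℝ) ^ (-(n:ℝ)) := by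
    rw [← Real.rpow_intCast]; norm_num
  have e2 : ((2:ℝ)^(-(2*n:ℤ)) : ℝ) = (2:ℝ) ^ (-(2*(n:ℝ))) := by
    rw [← Real.rpow_intCast]; push_cast; ring_nf
  -- extract the three inequalities from hn
  have hn1 : -Real.logb 2 δ ≤ (n:ℝ) := le_trans (le_max_left _ _) (le_trans (le_max_left _ _) hn)
  have hn2 : -(1/2) * Real.logb 2 (ε / (4*ζ)) ≤ (n:ℝ) :=
    le_trans (le_max_right _ _) (le_trans (le_max_left _ _) hn)
  have hn3 : -Real.logb 2 (ε / (2 * L * Real.sqrt l)) ≤ (n:ℝ) :=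
    le_trans (le_max_right _ _) hn
  have h1 : (2:ℝ) ^ (-(n:ℝ)) ≤ δ := aux_rpow_le δ n hδ hn1
  have h2 : (2:ℝ) ^ (-(2*(n:ℝ))) ≤ ε / (4*ζ) := by
    apply aux_rpow_le _ _ (div_pos hε (by linarith))
    linarith
  have h3 : (2:ℝ) ^ (-(n:ℝ)) ≤ ε / (2 * L * Real.sqrt l) :=
    aux_rpow_le _ _ (div_pos hε (by positivity)) hn3
  have hq : ζ * (2:ℝ)^(-(2*n:ℤ)) ≤ ε / 4 := by
    rw [e2]
    have h2' : (2:ℝ) ^ (-(2*(n:ℝ))) * (4*ζ) ≤ ε :=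
      (le_div_iff₀ (by positivity)).mp h2
    nlinarith
  have hr : L * Real.sqrt l * (2:ℝ)^(-(n:ℤ)) ≤ ε / 2 := by
    rw [e1]
    have h3' : (2:ℝ) ^ (-(n:ℝ)) * (2 * L * Real.sqrt l) ≤ ε :=
      (le_div_iff₀ (by positivity)).mp h3
    nlinarith
  constructor
  · intro i
    calc bX i - aX i ≤ (2:ℝ)^(-(n:ℤ)) := hXw i
    _ = (2:ℝ) ^ (-(n:ℝ)) := e1
    _ ≤ δ := h1
  · intro aY bY Y mBY MBY hYdef hYU hYw hY1 hY2 hY3 hY4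
    obtain ⟨x, hxX, hx⟩ := hX4
    obtain ⟨y, hyY, hy⟩ := hY2
    -- dist x xs ≤ √l * 2^{-n}
    have hdist : dist x xs ≤ Real.sqrt l * (2:ℝ)^(-(n:ℤ)) := by
      have hq0 : (0:ℝ) ≤ (2:ℝ)^(-(n:ℤ)) := by positivity
      rw [EuclideanSpace.dist_eq]
      have hsum : ∑ i, dist (x i) (xs i) ^ 2 ≤ (l:ℝ) * ((2:ℝ)^(-(n:ℤ)))^2 := by
        calc ∑ i, dist (x i) (xs i) ^ 2
            ≤ ∑ _i : Fin l, ((2:ℝ)^(-(n:ℤ)))^2 := by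
              apply Finset.sum_le_sum
              intro i _
              have hxi := (hXdef ▸ hxX) i
              have hxsi := (hXdef ▸ hxsX) i
              have : |x i - xs i| ≤ (2:ℝ)^(-(n:ℤ)) := by
                have hw := hXw i
                rw [abs_sub_le_iff]
                constructor <;>
                  [linarith [hxi.1, hxi.2, hxsi.1, hxsi.2];
                   linarith [hxi.1, hxi.2, hxsi.1, hxsi.2]]
              rw [Real.dist_eq]
              exact pow_le_pow_left₀ (abs_nonneg _) this 2
        _ = (l:ℝ) * ((2:ℝ)^(-(n:ℤ)))^2 := by
              rw [Finset.sum_const, Finset.card_univ, Fintype.card_fin, nsmul_eq_mul]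
      calc Real.sqrt (∑ i, dist (x i) (xs i) ^ 2)
          ≤ Real.sqrt ((l:ℝ) * ((2:ℝ)^(-(n:ℤ)))^2) := Real.sqrt_le_sqrt hsum
      _ = Real.sqrt l * (2:ℝ)^(-(n:ℤ)) := by
          rw [Real.sqrt_mul (by positivity), Real.sqrt_sq hq0]
    have hpx : p x ≤ p xs + L * (Real.sqrt l * (2:ℝ)^(-(n:ℤ))) := by
      have := hLip x (hXU hxX) xs hxsU
      have habs := abs_le.mp this
      have hd : L * dist x xs ≤ L * (Real.sqrt l * (2:ℝ)^(-(n:ℤ))) :=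
        mul_le_mul_of_nonneg_left hdist hL.le
      linarith [habs.2]
    have hmin : p xs ≤ p y := hxsmin y (hYU hyY)
    have : MBX ≤ p x + ζ * (2:ℝ)^(-(2*n:ℤ)) := by linarith
    have : mBY ≥ p y - ζ * (2:ℝ)^(-(2*n:ℤ)) := by linarith
    nlinarith [hq, hr]
end

section
/- Suppose the enclosure bounds min B(X) ≤ min_X p ≤ min B(X) + ζ·2^{-2n} and max B(X) − ζ·2^{-2n} ≤ max_X p hold for all subboxes of width 2^{-n}, p satisfies the quadratic growth (σ_min/4)‖x−x*‖² ≤ p(x)−p(x*) ≤ σ_max‖x−x*‖² near the unique global minimizer x*, and let R' = √(4(σ_max·l + 2ζ)/σ_min)·2^{-n}. Then for any subbox Y of width 2^{-n} with dist(Y, x*) > R', and the subbox X of width 2^{-n} containing x*, one has min B(Y) > max B(X). -/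
/-- Elimination estimate (key step of Theorem 6): under two-sided quadratic growth
around the global minimizer x* and the Bernstein enclosure bounds, any subbox Y of
width 2^{-n} at distance more than R' = √(4(σ_max·l + 2ζ)/σ_min)·2^{-n} from x*
has patch lower bound strictly greater than the patch upper bound of the subbox X
containing x*. -/
theorem elimination_estimate (l n : ℕ) (σmin σmax ζ R : ℝ)
    (hσmin : 0 < σmin) (hσ : σmin ≤ σmax) (hζ : 0 ≤ ζ)
    (p : EuclideanSpace ℝ (Fin l) → ℝ)
    (xs : EuclideanSpace ℝ (Fin l))
    (hgrowth : ∀ x ∈ Metric.closedBall xs R,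
        σmin / 4 * ‖x - xs‖^2 ≤ p x - p xs ∧ p x - p xs ≤ σmax * ‖x - xs‖^2)
    (aX bX aY bY : Fin l → ℝ)
    (X Y : Set (EuclideanSpace ℝ (Fin l)))
    (hXdef : X = {x : EuclideanSpace ℝ (Fin l) | ∀ i, x i ∈ Set.Icc (aX i) (bX i)})
    (hYdef : Y = {x : EuclideanSpace ℝ (Fin l) | ∀ i, x i ∈ Set.Icc (aY i) (bY i)})
    (hXw : ∀ i, bX i - aX i ≤ (2:ℝ)^(-(n:ℤ)))
    (hYw : ∀ i, bY i - aY i ≤ (2:ℝ)^(-(n:ℤ)))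
    (hxsX : xs ∈ X)
    (hXR : X ⊆ Metric.closedBall xs R) (hYR : Y ⊆ Metric.closedBall xs R)
    (R' : ℝ)
    (hR' : R' = Real.sqrt (4 * (σmax * l + 2 * ζ) / σmin) * (2:ℝ)^(-(n:ℤ)))
    (hYfar : ∀ y ∈ Y, R' < ‖y - xs‖)
    (mBY MBX : ℝ)
    (hY2 : ∃ y ∈ Y, p y ≤ mBY + ζ * (2:ℝ)^(-(2*n:ℤ)))
    (hX4 : ∃ x ∈ X, MBX - ζ * (2:ℝ)^(-(2*n:ℤ)) ≤ p x) :
    MBX < mBY := by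
  obtain ⟨y, hyY, hy⟩ := hY2
  obtain ⟨x, hxX, hx⟩ := hX4
  set t : ℝ := (2:ℝ)^(-(n:ℤ)) with ht
  have htpos : 0 < t := by positivity
  have hσmax : 0 < σmax := lt_of_lt_of_le hσmin hσ
  have ht2 : (2:ℝ)^(-(2*n:ℤ)) = t^2 := by
    rw [ht, show (-(2*(n:ℕ):ℤ)) = (-(n:ℤ)) + (-(n:ℤ)) by push_cast; ring,
      zpow_add₀ (by norm_num : (2:ℝ) ≠ 0), sq]
  rw [ht2] at hy hx
  have hgy := hgrowth y (hYR hyY)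
  have hgx := hgrowth x (hXR hxX)
  have hxsX' : ∀ i, xs i ∈ Set.Icc (aX i) (bX i) := by rw [hXdef] at hxsX; exact hxsX
  have hxX' : ∀ i, x i ∈ Set.Icc (aX i) (bX i) := by rw [hXdef] at hxX; exact hxX
  -- bound ‖x - xs‖² ≤ l * t²
  have hnormx : ‖x - xs‖^2 ≤ l * t^2 := by
    rw [EuclideanSpace.norm_eq (x - xs), Real.sq_sqrt (by positivity)]
    calc ∑ i, ‖(x - xs) i‖^2 ≤ ∑ _i : Fin l, t^2 := by
          apply Finset.sum_le_sum
          intro i _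
          have h1 := hxX' i
          have h2 := hxsX' i
          have habs : |x i - xs i| ≤ t := by
            have := hXw i
            rw [abs_le]
            constructor <;> simp only [Set.mem_Icc] at h1 h2 <;>
              [linarith [h1.1, h2.2]; linarith [h1.2, h2.1]]
          have h3 : ‖(x - xs) i‖ = |x i - xs i| := by
            simp [Real.norm_eq_abs]
          rw [h3]
          exact pow_le_pow_left₀ (abs_nonneg _) habs 2
      _ = l * t^2 := by simp [Finset.sum_const]
  -- R' squared
  have hR'sq : R'^2 = 4 * (σmax * l + 2 * ζ) / σmin * t^2 := by
    rw [hR', mul_pow, Real.sq_sqrt (by positivity)]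
  have hR'nonneg : 0 ≤ R' := by
    rw [hR']; positivity
  have hyfar := hYfar y hyY
  have hysq : R'^2 < ‖y - xs‖^2 := by
    have := norm_nonneg (y - xs)
    nlinarith
  have hkey : (σmax * l + 2 * ζ) * t^2 < p y - p xs := by
    have h1 : σmin / 4 * R'^2 < σmin / 4 * ‖y - xs‖^2 := by nlinarith
    have h2 : σmin / 4 * R'^2 = (σmax * l + 2 * ζ) * t^2 := by
      rw [hR'sq]; field_simp
    linarith [hgy.1]
  have hxbound : p x - p xs ≤ σmax * (l * t^2) := by
    have h := hgx.2
    nlinarith [sq_nonneg t]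
  have hexp : (σmax * l + 2 * ζ) * t^2 = σmax * (l * t^2) + 2 * (ζ * t^2) := by ring
  linarith
end
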